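/- arXiv:2309.10301 — 5 statements merged into one kernel-verified Lean document; each statement's English description precedes it below -/
import Mathlib

section
/- Let h_inv be a conditionally invariant classifier and assume there is no label shift between the first source distribution P^(1) and the target distribution P^T. Then for every classifier h : R^p → {1,…,L}: | [R^T(h) − R^(1)(h)] − [P(h(X^T) ≠ h_inv(X^T)) − P(h(X^(1)) ≠ h_inv(X^(1)))] | ≤ 2·R^(1)(h_inv). -/
open MeasureTheory ProbabilityTheory

noncomputable section

/-- Covariate space `ℝ^n`. -/
abbrev Vec (n : ℕ) := Fin n → ℝ

/-- 0-1 population risk of a classifier `h` under a joint distribution on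
covariates and labels. -/
def risk {p L : ℕ} (P : Measure (Vec p × Fin L)) (h : Vec p → Fin L) : ℝ :=
  (P {z | h z.1 ≠ z.2}).toReal

/-- Importance-weighted population risk `E[ω_Y · 1{h(X) ≠ Y}]`. -/
def wrisk {p L : ℕ} (P : Measure (Vec p × Fin L)) (h : Vec p → Fin L) (ω : Fin L → ℝ) : ℝ :=
  ∫ z, ω z.2 * (if h z.1 ≠ z.2 then (1:ℝ) else 0) ∂P

/-- Conditional law of `φ(X)` given `Y = y`. -/
def condLaw {p L : ℕ} {α : Type*} [MeasurableSpace α]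
    (P : Measure (Vec p × Fin L)) (φ : Vec p → α) (y : Fin L) : Measure α :=
  (P[|{z | z.2 = y}]).map (fun z => φ z.1)

/-- `G`-divergence between two distributions on `ℝ^q`. -/
def Gdiv {q L : ℕ} (G : Set (Vec q → Fin L)) (P Q : Measure (Vec q)) : ℝ :=
  ⨆ g : G, ⨆ y : Fin L, |(P {z | g.1 z = y}).toReal - (Q {z | g.1 z = y}).toReal|

/-- Deviation from conditional invariance of a feature map `φ`. -/
def Psi {p q L M : ℕ} (G : Set (Vec q → Fin L))
    (PT : Measure (Vec p × Fin L)) (Ps : Fin M → Measure (Vec p × Fin L))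
    (φ : Vec p → Vec q) : ℝ :=
  ⨆ m : Fin M, ⨆ y : Fin L, Gdiv G (condLaw PT φ y) (condLaw (Ps m) φ y)

/-- True importance weights `w^(m)_j = P(Y^T = j)/P(Y^(m) = j)`. -/
def trueW {p L M : ℕ} (PT : Measure (Vec p × Fin L)) (Ps : Fin M → Measure (Vec p × Fin L))
    (m : Fin M) (j : Fin L) : ℝ :=
  (PT {z | z.2 = j}).toReal / ((Ps m) {z | z.2 = j}).toReal

/-- Sup norm on `ℝ^L`. -/
def supNorm {L : ℕ} (v : Fin L → ℝ) : ℝ := ⨆ j : Fin L, |v j|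

/-!
The disagreement probability `μ {f ≠ g}` satisfies the triangle inequality, so under either
distribution the risk of `h` and its disagreement with `h_inv` differ by at most the risk of
`h_inv`. That risk is the label-weighted average of the conditional laws of `h_inv(X)` given
`Y = y`; conditional invariance and the absence of label shift make it the same under `P^T` and
`P^(1)`, which gives the factor `2`.
-/

namespace MeasureTheory

variable {Ω : Type*} [MeasurableSpace Ω] {μ : Measure Ω} [IsFiniteMeasure μ]

theorem abs_measureReal_sub_le_of_subset_union {s t u : Set Ω} (hst : s ⊆ t ∪ u)
    (hts : t ⊆ s ∪ u) : |μ.real s - μ.real t| ≤ μ.real u := by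
  have hs : μ.real s ≤ μ.real t + μ.real u :=
    (measureReal_mono hst).trans (measureReal_union_le t u)
  have ht : μ.real t ≤ μ.real s + μ.real u :=
    (measureReal_mono hts).trans (measureReal_union_le s u)
  rw [abs_sub_le_iff]
  constructor <;> linarith

theorem abs_measureReal_ne_sub_measureReal_ne_le {β : Type*} (f g k : Ω → β) :
    |μ.real {x | f x ≠ k x} - μ.real {x | f x ≠ g x}| ≤ μ.real {x | g x ≠ k x} := by
  refine abs_measureReal_sub_le_of_subset_union (fun x hfk => ?_) (fun x hfg => ?_)
  · by_cases hfg : f x = g x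
    · exact Or.inr fun hgk => hfk (hfg.trans hgk)
    · exact Or.inl hfg
  · by_cases hfk : f x = k x
    · exact Or.inr fun hgk => hfg (hfk.trans hgk.symm)
    · exact Or.inl hfk

end MeasureTheory

theorem measure_ne_label_eq_sum_condLaw {p L : ℕ} (P : Measure (Vec p × Fin L))
    [IsFiniteMeasure P] {φ : Vec p → Fin L} (hφ : Measurable φ) :
    P {z | φ z.1 ≠ z.2} = ∑ y, P {z | z.2 = y} * condLaw P φ y {y}ᶜ := by
  conv_lhs => rw [← sum_meas_smul_cond_fiber measurable_snd P]
  simp only [Measure.coe_finsetSum, Finset.sum_apply, Measure.coe_smul, Pi.smul_apply,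
    smul_eq_mul]
  refine Finset.sum_congr rfl fun y _ => ?_
  have hY : MeasurableSet {z : Vec p × Fin L | z.2 = y} := measurable_snd (.singleton y)
  change P {z | z.2 = y} * P[{z | φ z.1 ≠ z.2} | {z | z.2 = y}] = _
  rw [condLaw, Measure.map_apply (f := fun z : Vec p × Fin L => φ z.1) (hφ.comp measurable_fst)
    (measurableSet_singleton y).compl, ← cond_inter_self hY, ← cond_inter_self hY (_ ⁻¹' _)]
  congr 2
  ext z
  simp +contextual

theorem risk_eq_of_condLaw_eq {p L : ℕ} {P Q : Measure (Vec p × Fin L)} [IsFiniteMeasure P]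
    [IsFiniteMeasure Q] {φ : Vec p → Fin L} (hφ : Measurable φ)
    (hlaw : ∀ y, condLaw P φ y = condLaw Q φ y)
    (hlabel : ∀ y, P {z | z.2 = y} = Q {z | z.2 = y}) :
    risk P φ = risk Q φ := by
  simp only [risk, measure_ne_label_eq_sum_condLaw P hφ, measure_ne_label_eq_sum_condLaw Q hφ,
    hlaw, hlabel]

theorem statement7_general {p L M : ℕ} [NeZero M]
    (PT : Measure (Vec p × Fin L)) [IsProbabilityMeasure PT]
    (Ps : Fin M → Measure (Vec p × Fin L)) [∀ m, IsProbabilityMeasure (Ps m)]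
    (hinv : Vec p → Fin L) (hinvMeas : Measurable hinv)
    (hCI : ∀ (m : Fin M) (y : Fin L), condLaw (Ps m) hinv y = condLaw PT hinv y)
    (hNoLabelShift : ∀ y : Fin L, (Ps 0) {z | z.2 = y} = PT {z | z.2 = y})
    (h : Vec p → Fin L) :
    |(risk PT h - risk (Ps 0) h) -
        ((PT {z | h z.1 ≠ hinv z.1}).toReal - ((Ps 0) {z | h z.1 ≠ hinv z.1}).toReal)| ≤
      2 * risk (Ps 0) hinv := by
  have hrisk : risk PT hinv = risk (Ps 0) hinv :=
    risk_eq_of_condLaw_eq hinvMeas (fun y => (hCI 0 y).symm) (fun y => (hNoLabelShift y).symm)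
  have hT := abs_measureReal_ne_sub_measureReal_ne_le (μ := PT)
    (fun z => h z.1) (fun z => hinv z.1) Prod.snd
  have hS := abs_measureReal_ne_sub_measureReal_ne_le (μ := Ps 0)
    (fun z => h z.1) (fun z => hinv z.1) Prod.snd
  simp only [risk, measureReal_def] at hrisk hT hS ⊢
  rw [abs_le] at hT hS ⊢
  constructor <;> linarith [hT.1, hT.2, hS.1, hS.2]

/-- **Theorem 4.1**: a conditionally invariant classifier controls the source–target
risk difference of any classifier via observable prediction-agreement quantities. -/
theorem statement7 {p L M : ℕ} [NeZero M]
    (PT : Measure (Vec p × Fin L)) [IsProbabilityMeasure PT]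
    (Ps : Fin M → Measure (Vec p × Fin L)) [∀ m, IsProbabilityMeasure (Ps m)]
    (hinv : Vec p → Fin L) (hinvMeas : Measurable hinv)
    (hCI : ∀ (m : Fin M) (y : Fin L), condLaw (Ps m) hinv y = condLaw PT hinv y)
    (hNoLabelShift : ∀ y : Fin L, (Ps 0) {z | z.2 = y} = PT {z | z.2 = y})
    (h : Vec p → Fin L) (hMeas : Measurable h) :
    |(risk PT h - risk (Ps 0) h) -
        ((PT {z | h z.1 ≠ hinv z.1}).toReal - ((Ps 0) {z | h z.1 ≠ hinv z.1}).toReal)| ≤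
      2 * risk (Ps 0) hinv :=
  statement7_general PT Ps hinv hinvMeas hCI hNoLabelShift h

end
end

section
/- Assume there is no label shift between P^(1) and P^T. Let h_inv = g_inv∘φ_inv with g_inv ∈ G and φ_inv ∈ Φ (not necessarily conditionally invariant). Then for every classifier h : R^p → {1,…,L}: | [R^T(h) − R^(1)(h)] − [P(h(X^T) ≠ h_inv(X^T)) − P(h(X^(1)) ≠ h_inv(X^(1)))] | ≤ 2·R^(1)(h_inv) + L·Ψ_{G,φ_inv}. -/
open MeasureTheory ProbabilityTheory

noncomputable section

/-!
Write `h_inv = g_inv ∘ φ_inv`. On every distribution the events `h ≠ Y` and `h ≠ h_inv` differ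
only where `h_inv ≠ Y`, so the left-hand side is at most `R^T(h_inv) + R^(1)(h_inv)`. It remains
to compare the two risks of `h_inv`: conditioning on the label, and using that both label
marginals agree, `R^T(h_inv) - R^(1)(h_inv)` is a sum over `y` of `P(Y = y)` times the difference
of the conditional probabilities of `g_inv(φ_inv(X)) = y`, each bounded by `Ψ_{G,φ_inv}`.
-/

open scoped symmDiff

lemma abs_measureReal_sub_le_of_symmDiff_subset {Ω : Type*} [MeasurableSpace Ω]
    {μ : Measure Ω} [IsFiniteMeasure μ] {s t u : Set Ω} (h : s ∆ t ⊆ u) :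
    |μ.real s - μ.real t| ≤ μ.real u := by
  have key : ∀ {a b : Set Ω}, a ∆ b ⊆ u → μ.real a ≤ μ.real b + μ.real u := fun hab =>
    calc μ.real _ ≤ μ.real (_ ∪ u) :=
          measureReal_mono fun x hx => or_iff_not_imp_left.2 fun hxb => hab (Or.inl ⟨hx, hxb⟩)
      _ ≤ _ := measureReal_union_le _ _
  rw [abs_sub_le_iff]
  exact ⟨by linarith [key h], by linarith [key (symmDiff_comm s t ▸ h)]⟩

section Gdiv

variable {q L : ℕ}

lemma abs_sub_le_Gdiv {G : Set (Vec q → Fin L)} {P Q : Measure (Vec q)}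
    [IsZeroOrProbabilityMeasure P] [IsZeroOrProbabilityMeasure Q]
    {g : Vec q → Fin L} (hg : g ∈ G) (y : Fin L) :
    |P.real {z | g z = y} - Q.real {z | g z = y}| ≤ Gdiv G P Q := by
  have hbdd : BddAbove (Set.range fun g : G =>
      ⨆ y : Fin L, |(P {z | g.1 z = y}).toReal - (Q {z | g.1 z = y}).toReal|) := by
    refine ⟨1, Set.forall_mem_range.2 fun g => Real.iSup_le (fun y => ?_) zero_le_one⟩
    exact abs_sub_le_of_le_of_le (measureReal_nonneg (μ := P)) measureReal_le_one
      (measureReal_nonneg (μ := Q)) measureReal_le_one |>.trans_eq (sub_zero 1)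
  exact le_ciSup_of_le hbdd ⟨g, hg⟩ (le_ciSup (f := fun y =>
    |(P {z | g z = y}).toReal - (Q {z | g z = y}).toReal|) (Finite.bddAbove_range _) y)

end Gdiv

section LabelFibers

variable {p L : ℕ}

instance {α : Type*} [MeasurableSpace α] (P : Measure (Vec p × Fin L)) (φ : Vec p → α)
    (y : Fin L) : IsZeroOrProbabilityMeasure (condLaw P φ y) := by
  unfold condLaw; infer_instance

lemma Gdiv_condLaw_le_Psi {q M : ℕ} (G : Set (Vec q → Fin L))
    (PT : Measure (Vec p × Fin L)) (Ps : Fin M → Measure (Vec p × Fin L))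
    (φ : Vec p → Vec q) (m : Fin M) (y : Fin L) :
    Gdiv G (condLaw PT φ y) (condLaw (Ps m) φ y) ≤ Psi G PT Ps φ :=
  le_ciSup_of_le (Finite.bddAbove_range _) m
    (le_ciSup (f := fun y => Gdiv G (condLaw PT φ y) (condLaw (Ps m) φ y))
      (Finite.bddAbove_range _) y)

lemma measurableSet_label_eq (y : Fin L) : MeasurableSet {z : Vec p × Fin L | z.2 = y} :=
  measurable_snd (MeasurableSet.singleton y)

lemma measureReal_comp_eq_label {α : Type*} [MeasurableSpace α]
    (P : Measure (Vec p × Fin L)) [IsFiniteMeasure P]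
    {φ : Vec p → α} (hφ : Measurable φ) {g : α → Fin L} (hg : Measurable g) :
    P.real {z | g (φ z.1) = z.2} =
      ∑ y, P.real {z | z.2 = y} * (condLaw P φ y).real {v | g v = y} := by
  have hφ' : Measurable fun z : Vec p × Fin L => φ z.1 := hφ.comp measurable_fst
  have hfiber : ∀ y : Fin L, MeasurableSet {v | g v = y} :=
    fun y => measurableSet_eq_fun hg measurable_const
  have hunion : {z : Vec p × Fin L | g (φ z.1) = z.2} =
      ⋃ y, {z | z.2 = y} ∩ (fun z => φ z.1) ⁻¹' {v | g v = y} := by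
    ext z; simp [eq_comm]
  have hdisj : Pairwise (Function.onFun Disjoint fun y : Fin L =>
      {z : Vec p × Fin L | z.2 = y} ∩ (fun z => φ z.1) ⁻¹' {v | g v = y}) :=
    fun y y' hyy' => Set.disjoint_left.2 fun z hz hz' => hyy' (hz.1.symm.trans hz'.1)
  rw [hunion, measureReal_iUnion_fintype hdisj
    fun y => (measurableSet_label_eq y).inter (hφ' (hfiber y))]
  refine Finset.sum_congr rfl fun y _ => ?_
  simp only [condLaw, measureReal_def]
  rw [Measure.map_apply hφ' (hfiber y), ← ENNReal.toReal_mul, mul_comm,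
    cond_mul_eq_inter (measurableSet_label_eq y)]

lemma risk_eq_one_sub (P : Measure (Vec p × Fin L)) [IsProbabilityMeasure P]
    {h : Vec p → Fin L} (hh : Measurable h) :
    risk P h = 1 - P.real {z | h z.1 = z.2} := by
  rw [← probReal_compl_eq_one_sub (measurableSet_eq_fun
    (f := fun z : Vec p × Fin L => h z.1) (hh.comp measurable_fst) measurable_snd)]
  rfl

lemma abs_risk_sub_measureReal_ne_le (μ : Measure (Vec p × Fin L)) [IsFiniteMeasure μ]
    (h h' : Vec p → Fin L) :
    |risk μ h - μ.real {z | h z.1 ≠ h' z.1}| ≤ risk μ h' := by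
  refine abs_measureReal_sub_le_of_symmDiff_subset ?_
  rintro z (⟨hne, heq⟩ | ⟨hne, heq⟩) <;> simp only [Set.mem_ofPred_eq, not_not] at hne heq ⊢
  · exact heq ▸ hne
  · exact heq ▸ Ne.symm hne

lemma risk_comp_sub_risk_comp_le {q M : ℕ} {G : Set (Vec q → Fin L)}
    (PT : Measure (Vec p × Fin L)) [IsProbabilityMeasure PT]
    (Ps : Fin M → Measure (Vec p × Fin L)) (m : Fin M) [IsProbabilityMeasure (Ps m)]
    (hLabel : ∀ y : Fin L, (Ps m) {z | z.2 = y} = PT {z | z.2 = y})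
    {g : Vec q → Fin L} (hgG : g ∈ G) (hg : Measurable g) {φ : Vec p → Vec q}
    (hφ : Measurable φ) :
    risk PT (fun x => g (φ x)) - risk (Ps m) (fun x => g (φ x)) ≤ L * Psi G PT Ps φ := by
  have hgφ : Measurable fun x => g (φ x) := hg.comp hφ
  rw [risk_eq_one_sub PT hgφ, risk_eq_one_sub (Ps m) hgφ,
    measureReal_comp_eq_label PT hφ hg, measureReal_comp_eq_label (Ps m) hφ hg]
  have hLabelReal : ∀ y : Fin L, (Ps m).real {z | z.2 = y} = PT.real {z | z.2 = y} :=
    fun y => by rw [measureReal_def, hLabel, measureReal_def]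
  simp only [hLabelReal]
  calc _ = ∑ y : Fin L, PT.real {z | z.2 = y} * ((condLaw (Ps m) φ y).real {v | g v = y} -
          (condLaw PT φ y).real {v | g v = y}) := by
        rw [sub_sub_sub_cancel_left, ← Finset.sum_sub_distrib]
        simp only [mul_sub]
    _ ≤ ∑ _y : Fin L, Psi G PT Ps φ := Finset.sum_le_sum fun y _ => by
        have hdiv := (abs_sub_le_Gdiv hgG y).trans (Gdiv_condLaw_le_Psi G PT Ps φ m y)
        rw [abs_sub_comm] at hdiv
        calc _ ≤ PT.real {z | z.2 = y} * |(condLaw (Ps m) φ y).real {v | g v = y} -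
                (condLaw PT φ y).real {v | g v = y}| :=
              mul_le_mul_of_nonneg_left (le_abs_self _) measureReal_nonneg
          _ ≤ _ := (mul_le_of_le_one_left (abs_nonneg _) measureReal_le_one).trans hdiv
    _ = L * Psi G PT Ps φ := by simp

end LabelFibers

theorem statement8_general {p q L M : ℕ} [NeZero M]
    (PT : Measure (Vec p × Fin L)) [IsProbabilityMeasure PT]
    (Ps : Fin M → Measure (Vec p × Fin L)) [∀ m, IsProbabilityMeasure (Ps m)]
    (hNoLabelShift : ∀ y : Fin L, (Ps 0) {z | z.2 = y} = PT {z | z.2 = y})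
    (G : Set (Vec q → Fin L))
    (ginv : Vec q → Fin L) (hginv : ginv ∈ G) (hginvMeas : Measurable ginv)
    (φinv : Vec p → Vec q) (hφinvMeas : Measurable φinv)
    (h : Vec p → Fin L) :
    |(risk PT h - risk (Ps 0) h) -
        ((PT {z | h z.1 ≠ ginv (φinv z.1)}).toReal -
          ((Ps 0) {z | h z.1 ≠ ginv (φinv z.1)}).toReal)| ≤
      2 * risk (Ps 0) (fun x => ginv (φinv x)) + L * Psi G PT Ps φinv := by
  have hT := abs_le.1 (abs_risk_sub_measureReal_ne_le PT h fun x => ginv (φinv x))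
  have hS := abs_le.1 (abs_risk_sub_measureReal_ne_le (Ps 0) h fun x => ginv (φinv x))
  have hInv := risk_comp_sub_risk_comp_le PT Ps 0 hNoLabelShift hginv hginvMeas hφinvMeas
  simp only [← measureReal_def]
  rw [abs_le]
  constructor <;> linarith [hT.1, hT.2, hS.1, hS.2]

/-- **Generalized Theorem 4.1 (Appendix C.1)**: for `h_inv = g_inv ∘ φ_inv` not necessarily
conditionally invariant, the bound acquires the extra term `L · Ψ_{G, φ_inv}`. -/
theorem statement8 {p q L M : ℕ} [NeZero M]
    (PT : Measure (Vec p × Fin L)) [IsProbabilityMeasure PT]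
    (Ps : Fin M → Measure (Vec p × Fin L)) [∀ m, IsProbabilityMeasure (Ps m)]
    (hNoLabelShift : ∀ y : Fin L, (Ps 0) {z | z.2 = y} = PT {z | z.2 = y})
    (G : Set (Vec q → Fin L)) (Φ : Set (Vec p → Vec q))
    (ginv : Vec q → Fin L) (hginv : ginv ∈ G) (hginvMeas : Measurable ginv)
    (φinv : Vec p → Vec q) (hφinv : φinv ∈ Φ) (hφinvMeas : Measurable φinv)
    (h : Vec p → Fin L) (hMeas : Measurable h) :
    |(risk PT h - risk (Ps 0) h) -
        ((PT {z | h z.1 ≠ ginv (φinv z.1)}).toReal -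
          ((Ps 0) {z | h z.1 ≠ ginv (φinv z.1)}).toReal)| ≤
      2 * risk (Ps 0) (fun x => ginv (φinv x)) + L * Psi G PT Ps φinv :=
  statement8_general PT Ps hNoLabelShift G ginv hginv hginvMeas φinv hφinvMeas h
end
end

section
/- Suppose the data follow the general anticausal model with uniform label distributions, and let Φ = { x ↦ Ax + b : A ∈ R^{q×p}, b ∈ R^q }. Let φ_inv : R^p → R^r be a linear conditionally invariant feature map such that E[φ_inv(X^(1)) | Y^(1) = i] ≠ E[φ_inv(X^(1)) | Y^(1) = j] for all i ≠ j in {1,…,L}. Then any φ ∈ Φ satisfying the exact joint matching constraint P^(1)_{(φ, φ_inv)(X)} = P^T_{(φ, φ_inv)(X)} is conditionally invariant across P^(1) and P^T; in particular the population JointDIP feature map φ_j-DIP (a minimizer of R^(1)(g∘φ) over g ∈ G, φ ∈ Φ subject to this constraint) is conditionally invariant. If additionally r ≤ q, then R^T(h_j-DIP) ≤ min_{g ∈ G} R^T(g∘φ_inv⁰), where φ_inv⁰ = (φ_inv, 0_{q−r}) is φ_inv padded with q − r zero coordinates; and when φ_inv = φ* is the feature map of the optimal conditionally invariant classifier h*,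 R^T(h_j-DIP) ≤ R^T(h*). -/
open MeasureTheory ProbabilityTheory

noncomputable section

/-- Mean vector of a distribution on `ℝ^r`. -/
def meanVec {r : ℕ} (Q : Measure (Vec r)) : Vec r := fun i => ∫ v, v i ∂Q

/-- Uniform distribution on `Fin L`. -/
def unifFin (L : ℕ) : Measure (Fin L) := ((L : ENNReal))⁻¹ • Measure.count

/-- The general anticausal data-generating distribution: `Y ~ μY`,
`X = f(Y) + ε` with `ε ~ Pε` independent of `Y`. -/
def anticausal {p L : ℕ} (μY : Measure (Fin L)) (f : Fin L → Vec p)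
    (Pε : Measure (Vec p)) : Measure (Vec p × Fin L) :=
  (μY.prod Pε).map (fun w => (f w.1 + w.2, w.1))

/-- Padding `ℝ^r → ℝ^q` with zeros (for `r ≤ q`). -/
def pad {r q : ℕ} (w : Vec r) : Vec q :=
  fun i => if hi : (i : ℕ) < r then w ⟨i, hi⟩ else 0

/-!
Conditional invariance of `φ_inv x = B x + c` forces `B f⁽ᵐ⁾(y) = B fᵀ(y)` (compare conditional
means, the noise being centred), and label separation says that the points
`D y = B f⁽¹⁾(y) + c` are distinct. If `(A x + b, B x + c)` has the same law under `P⁽¹⁾` and `Pᵀ`,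
integrating `z₁ₖ · exp(i⟪s, z₂⟫)` against this law gives
`ψ(sᵀB) · ∑_y w_y exp(i⟪s, D y⟫) = 0`, where `ψ` is the characteristic function of `ε` and
`w_y ∝ (A f⁽¹⁾(y) - A fᵀ(y))ₖ`. As `ψ ≠ 0` near `0`, the exponential polynomial vanishes near `0`,
hence everywhere by analyticity, and distinct characters are linearly independent, so `w = 0`.
Hence `A f⁽¹⁾ = A fᵀ`: the feature is conditionally invariant, every JointDIP-feasible classifier
has equal source and target risk, and the zero-padded `φ_inv` is itself feasible.
-/

open Matrix
open scoped Complex ENNReal Topology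
open Complex (I)

section AnticausalModel

variable {p L : ℕ} (μY : Measure (Fin L)) (f : Fin L → Vec p) (Pε : Measure (Vec p))

lemma measurableEmbedding_add_label (v : Vec p) (y : Fin L) :
    MeasurableEmbedding (fun e : Vec p => (v + e, y)) :=
  (MeasurableEquiv.prodComm.measurableEmbedding.comp (measurableEmbedding_prodMk_left y)).comp
    (MeasurableEquiv.addLeft v).measurableEmbedding

variable [SFinite Pε]

lemma anticausal_eq_sum :
    anticausal μY f Pε = ∑ y, μY {y} • Pε.map (fun e => (f y + e, y)) := by
  ext s hs
  have hmeas : Measurable fun w : Fin L × Vec p => (f w.1 + w.2, w.1) := by fun_prop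
  rw [anticausal, Measure.map_apply hmeas hs, Measure.prod_apply (hmeas hs), lintegral_fintype,
    Measure.coe_finsetSum, Finset.sum_apply]
  refine Finset.sum_congr rfl fun y _ => ?_
  rw [Measure.smul_apply, smul_eq_mul, mul_comm, (measurableEmbedding_add_label (f y) y).map_apply]
  rfl

lemma anticausal_apply (s : Set (Vec p × Fin L)) :
    anticausal μY f Pε s = ∑ y, μY {y} * Pε {e | (f y + e, y) ∈ s} := by
  rw [anticausal_eq_sum, Measure.coe_finsetSum, Finset.sum_apply]
  exact Finset.sum_congr rfl fun y _ => by
    rw [Measure.smul_apply, smul_eq_mul, (measurableEmbedding_add_label (f y) y).map_apply]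
    rfl

lemma risk_anticausal_eq_of_forall {f₁ f₂ : Fin L → Vec p} {h₁ h₂ : Vec p → Fin L}
    (h : ∀ y e, h₁ (f₁ y + e) = h₂ (f₂ y + e)) :
    risk (anticausal μY f₁ Pε) h₁ = risk (anticausal μY f₂ Pε) h₂ := by
  simp only [risk, anticausal_apply, Set.mem_ofPred_eq, h]

lemma map_anticausal_eq_of_forall {β : Type*} [MeasurableSpace β] {f₁ f₂ : Fin L → Vec p}
    {g : Vec p → β} (hg : Measurable g) (h : ∀ y e, g (f₁ y + e) = g (f₂ y + e)) :
    (anticausal μY f₁ Pε).map (fun z => g z.1) = (anticausal μY f₂ Pε).map (fun z => g z.1) := by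
  ext s hs
  rw [Measure.map_apply (by fun_prop) hs, Measure.map_apply (by fun_prop) hs, anticausal_apply,
    anticausal_apply]
  simp only [Set.mem_preimage, h]

lemma integral_anticausal [IsFiniteMeasure μY] {E : Type*} [NormedAddCommGroup E]
    [NormedSpace ℝ E] {F : Vec p × Fin L → E} (hF : ∀ y, Integrable (fun e => F (f y + e, y)) Pε) :
    ∫ z, F z ∂(anticausal μY f Pε) = ∑ y, (μY {y}).toReal • ∫ e, F (f y + e, y) ∂Pε := by
  rw [anticausal_eq_sum, integral_finsetSum_measure fun y _ =>
    (((measurableEmbedding_add_label (f y) y).integrable_map_iff).mpr (hF y)).smul_measure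
      (measure_ne_top μY {y})]
  refine Finset.sum_congr rfl fun y _ => ?_
  rw [integral_smul_measure, (measurableEmbedding_add_label (f y) y).integral_map]

lemma cond_anticausal_label [IsProbabilityMeasure Pε] {y : Fin L} (hy : μY {y} ≠ 0)
    (hy' : μY {y} ≠ ∞) :
    (anticausal μY f Pε)[|{z | z.2 = y}] = Pε.map (fun e => (f y + e, y)) := by
  ext s hs
  rw [cond_apply (measurableSet_eq_fun measurable_snd measurable_const), anticausal_apply,
    anticausal_apply, (measurableEmbedding_add_label (f y) y).map_apply,
    Finset.sum_eq_single y (fun x _ hx => by simp [hx]) (by simp),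
    Finset.sum_eq_single y (fun x _ hx => by simp [hx]) (by simp)]
  simp [ENNReal.inv_mul_cancel_left hy hy', Set.preimage]

lemma condLaw_anticausal [IsProbabilityMeasure Pε] {α : Type*} [MeasurableSpace α]
    {φ : Vec p → α} (hφ : Measurable φ) {y : Fin L} (hy : μY {y} ≠ 0) (hy' : μY {y} ≠ ∞) :
    condLaw (anticausal μY f Pε) φ y = Pε.map (fun e => φ (f y + e)) := by
  rw [condLaw, cond_anticausal_label μY f Pε hy hy', Measure.map_map (by fun_prop)
    (measurableEmbedding_add_label (f y) y).measurable]
  rfl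

end AnticausalModel

section AffineFeatures

variable {p q : ℕ} {μ : Measure (Vec p)} (A : Matrix (Fin q) (Fin p) ℝ)

lemma integrable_mulVec_apply (hint : ∀ i, Integrable (fun x : Vec p => x i) μ) (k : Fin q) :
    Integrable (fun e => (A *ᵥ e) k) μ := by
  simp only [mulVec, dotProduct]
  exact integrable_finsetSum _ fun j _ => (hint j).const_mul _

lemma integral_mulVec_apply (hint : ∀ i, Integrable (fun x : Vec p => x i) μ)
    (hmean : ∀ i, ∫ x, x i ∂μ = 0) (k : Fin q) :
    ∫ e, (A *ᵥ e) k ∂μ = 0 := by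
  simp only [mulVec, dotProduct]
  rw [integral_finsetSum _ fun j _ => (hint j).const_mul _]
  simp [integral_const_mul, hmean]

lemma meanVec_map_affine [IsProbabilityMeasure μ] (hint : ∀ i, Integrable (fun x : Vec p => x i) μ)
    (hmean : ∀ i, ∫ x, x i ∂μ = 0) (b : Vec q) (v : Vec p) :
    meanVec (μ.map fun e => A *ᵥ (v + e) + b) = A *ᵥ v + b := by
  funext k
  rw [meanVec, integral_map (by fun_prop)
    (by fun_prop : Measurable fun w : Vec q => w k).aestronglyMeasurable]
  simp_rw [mulVec_add, Pi.add_apply, add_right_comm _ _ (b k)]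
  rw [integral_add (integrable_const _) (integrable_mulVec_apply A hint k),
    integral_mulVec_apply A hint hmean]
  simp

lemma meanVec_condLaw_anticausal_affine {L : ℕ} (μY : Measure (Fin L)) (f : Fin L → Vec p)
    [IsProbabilityMeasure μ] (hint : ∀ i, Integrable (fun x : Vec p => x i) μ)
    (hmean : ∀ i, ∫ x, x i ∂μ = 0) (b : Vec q) {y : Fin L} (hy : μY {y} ≠ 0) (hy' : μY {y} ≠ ∞) :
    meanVec (condLaw (anticausal μY f μ) (fun x => A *ᵥ x + b) y) = A *ᵥ f y + b := by
  rw [condLaw_anticausal μY f μ (by fun_prop) hy hy', meanVec_map_affine A hint hmean]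

end AffineFeatures

section ExponentialSums

variable {r : ℕ}

def expChar (d : Vec r) : Multiplicative (Vec r) →* ℂ where
  toFun s := cexp (↑(s.toAdd ⬝ᵥ d) * I)
  map_one' := by simp
  map_mul' s t := by simp [add_dotProduct, add_mul, Complex.exp_add]

lemma expChar_injective : Function.Injective (expChar (r := r)) := by
  intro d d' h
  funext k
  by_contra hne
  have hsub : d k - d' k ≠ 0 := sub_ne_zero.mpr hne
  -- at this `s` the two characters differ by the factor `exp (π I) = -1`
  set s : Vec r := Pi.single k (Real.pi / (d k - d' k))
  have hdiff : s ⬝ᵥ d = s ⬝ᵥ d' + Real.pi := by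
    simp only [s, single_dotProduct]
    field_simp
    ring
  have := DFunLike.congr_fun h (Multiplicative.ofAdd s)
  simp only [expChar, MonoidHom.coe_mk, OneHom.coe_mk, toAdd_ofAdd, hdiff, Complex.ofReal_add,
    add_mul, Complex.exp_add, Complex.exp_pi_mul_I] at this
  exact Complex.exp_ne_zero (↑(s ⬝ᵥ d') * I) (by linear_combination -this / 2)

lemma linearIndependent_cexp_dotProduct {ι : Type*} {D : ι → Vec r}
    (hD : Function.Injective D) :
    LinearIndependent ℂ (fun i => fun s : Vec r => cexp (↑(s ⬝ᵥ D i) * I)) :=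
  (linearIndependent_monoidHom (Multiplicative (Vec r)) ℂ).comp (expChar ∘ D)
    (expChar_injective.comp hD)

lemma analyticAt_cexp_dotProduct (d x : Vec r) :
    AnalyticAt ℝ (fun s : Vec r => cexp (↑(s ⬝ᵥ d) * I)) x := by
  have hdot : AnalyticAt ℝ (fun s : Vec r => s ⬝ᵥ d) x :=
    Finset.analyticAt_fun_sum _ fun i _ =>
      ((ContinuousLinearMap.proj i : Vec r →L[ℝ] ℝ).analyticAt x).fun_mul analyticAt_const
  exact (analyticAt_cexp.restrictScalars (𝕜 := ℝ)).comp
    (((Complex.ofRealCLM.analyticAt _).comp hdot).mul analyticAt_const)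

lemma eq_zero_of_sum_cexp_dotProduct_eventuallyEq_zero {ι : Type*} [Fintype ι] {D : ι → Vec r}
    (hD : Function.Injective D) {w : ι → ℂ}
    (h : (fun s : Vec r => ∑ i, w i * cexp (↑(s ⬝ᵥ D i) * I)) =ᶠ[𝓝 0] 0) : w = 0 := by
  have hanalytic : AnalyticOnNhd ℝ (fun s : Vec r => ∑ i, w i * cexp (↑(s ⬝ᵥ D i) * I)) Set.univ :=
    fun x _ => Finset.analyticAt_fun_sum _ fun i _ =>
      analyticAt_const.mul (analyticAt_cexp_dotProduct (D i) x)
  have hzero := hanalytic.eqOn_zero_of_preconnected_of_eventuallyEq_zero isPreconnected_univ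
    (Set.mem_univ 0) h
  funext i
  refine Fintype.linearIndependent_iff.mp (linearIndependent_cexp_dotProduct hD) w ?_ i
  funext s
  simpa using hzero (Set.mem_univ s)

end ExponentialSums

section FourierMoments

-- Mathlib's `charFun` needs an inner product space, and `Vec p` carries the sup norm.
def charFunVec {p : ℕ} (μ : Measure (Vec p)) (t : Vec p) : ℂ :=
  ∫ e, cexp (↑(t ⬝ᵥ e) * I) ∂μ

lemma continuous_charFunVec {p : ℕ} (μ : Measure (Vec p)) [IsFiniteMeasure μ] :
    Continuous (charFunVec μ) :=
  continuous_of_dominated (fun _ => by fun_prop)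
    (fun t => ae_of_all _ fun e => (Complex.norm_exp_ofReal_mul_I _).le) (integrable_const 1)
    (ae_of_all _ fun e => by fun_prop)

lemma charFunVec_zero {p : ℕ} (μ : Measure (Vec p)) [IsProbabilityMeasure μ] :
    charFunVec μ 0 = 1 := by
  simp [charFunVec]

variable {α : Type*} [MeasurableSpace α] {μ : Measure α}

lemma integrable_cexp_ofReal_mul_I [IsFiniteMeasure μ] {V : α → ℝ} (hV : Measurable V) :
    Integrable (fun x => cexp (↑(V x) * I)) μ :=
  .of_bound (by fun_prop) 1 (ae_of_all _ fun x => (Complex.norm_exp_ofReal_mul_I _).le)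

lemma integrable_ofReal_mul_cexp {U V : α → ℝ} (hU : Integrable U μ) (hV : Measurable V) :
    Integrable (fun x => (U x : ℂ) * cexp (↑(V x) * I)) μ :=
  hU.ofReal.mul_bdd (by fun_prop) (ae_of_all _ fun x => (Complex.norm_exp_ofReal_mul_I _).le)

lemma integral_ofReal_add_mul_cexp_add [IsFiniteMeasure μ] {U V : α → ℝ} (hU : Integrable U μ)
    (hV : Measurable V) (a θ : ℝ) :
    ∫ x, ((a + U x : ℝ) : ℂ) * cexp (↑(θ + V x) * I) ∂μ
      = cexp (↑θ * I) * (a * ∫ x, cexp (↑(V x) * I) ∂μ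
          + ∫ x, (U x : ℂ) * cexp (↑(V x) * I) ∂μ) := by
  have hsplit : (fun x => ((a + U x : ℝ) : ℂ) * cexp (↑(θ + V x) * I))
      = fun x => cexp (↑θ * I) * (a * cexp (↑(V x) * I) + (U x : ℂ) * cexp (↑(V x) * I)) := by
    funext x
    simp only [Complex.ofReal_add, add_mul, Complex.exp_add]
    ring
  rw [hsplit, integral_const_mul, integral_add ((integrable_cexp_ofReal_mul_I hV).const_mul _)
    (integrable_ofReal_mul_cexp hU hV), integral_const_mul]

end FourierMoments

section JointMatching

variable {p q r L : ℕ} (μY : Measure (Fin L)) [IsFiniteMeasure μY] (Pε : Measure (Vec p))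
  [IsProbabilityMeasure Pε] (hint : ∀ i, Integrable (fun x : Vec p => x i) Pε)
  (A : Matrix (Fin q) (Fin p) ℝ) (b : Vec q) (B : Matrix (Fin r) (Fin p) ℝ) (c : Vec r)

include hint in
lemma integral_coord_mul_cexp_map_anticausal (f : Fin L → Vec p) (k : Fin q) (s : Vec r) :
    ∫ z, ((z.1 k : ℝ) : ℂ) * cexp (↑(s ⬝ᵥ z.2) * I)
        ∂((anticausal μY f Pε).map fun z => (A *ᵥ z.1 + b, B *ᵥ z.1 + c))
      = ∑ y, (μY {y}).toReal • (cexp (↑(s ⬝ᵥ (B *ᵥ f y + c)) * I) *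
          (↑((A *ᵥ f y + b) k) * charFunVec Pε (s ᵥ* B)
            + ∫ e, ((A *ᵥ e) k : ℂ) * cexp (↑((s ᵥ* B) ⬝ᵥ e) * I) ∂Pε)) := by
  have hpoint : ∀ y e, (((A *ᵥ (f y + e) + b) k : ℝ) : ℂ) * cexp (↑(s ⬝ᵥ (B *ᵥ (f y + e) + c)) * I)
      = ↑((A *ᵥ f y + b) k + (A *ᵥ e) k)
          * cexp (↑(s ⬝ᵥ (B *ᵥ f y + c) + (s ᵥ* B) ⬝ᵥ e) * I) := by
    intro y e
    simp only [mulVec_add, Pi.add_apply, dotProduct_add, dotProduct_mulVec]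
    ring_nf
  rw [integral_map (by fun_prop) (by fun_prop), integral_anticausal μY f Pε fun y => ?_]
  · refine Finset.sum_congr rfl fun y _ => ?_
    simp only [hpoint]
    rw [integral_ofReal_add_mul_cexp_add (integrable_mulVec_apply A hint k) (by fun_prop)]
    rfl
  · simp only [hpoint]
    exact integrable_ofReal_mul_cexp ((integrable_const _).add (integrable_mulVec_apply A hint k))
      (by fun_prop)

include hint in
lemma mulVec_eq_of_map_affine_pair_eq (hμY : ∀ y, μY {y} ≠ 0) {f₁ f₂ : Fin L → Vec p}
    (hB : ∀ y, B *ᵥ f₁ y = B *ᵥ f₂ y) (hD : Function.Injective fun y => B *ᵥ f₁ y + c)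
    (hmatch : (anticausal μY f₁ Pε).map (fun z => (A *ᵥ z.1 + b, B *ᵥ z.1 + c))
      = (anticausal μY f₂ Pε).map (fun z => (A *ᵥ z.1 + b, B *ᵥ z.1 + c))) (y : Fin L) :
    A *ᵥ f₁ y = A *ᵥ f₂ y := by
  funext k
  set w : Fin L → ℂ := fun y => (μY {y}).toReal * ((A *ᵥ f₁ y) k - (A *ᵥ f₂ y) k)
  have hmoment : ∀ s : Vec r,
      charFunVec Pε (s ᵥ* B) * ∑ y, w y * cexp (↑(s ⬝ᵥ (B *ᵥ f₁ y + c)) * I) = 0 := by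
    intro s
    have h := congrArg (fun ν => ∫ z, ((z.1 k : ℝ) : ℂ) * cexp (↑(s ⬝ᵥ z.2) * I) ∂ν) hmatch
    simp only [integral_coord_mul_cexp_map_anticausal μY Pε hint, ← hB] at h
    rw [Finset.mul_sum, ← sub_eq_zero.mpr h, ← Finset.sum_sub_distrib]
    refine Finset.sum_congr rfl fun y _ => ?_
    simp only [w, Complex.real_smul, Pi.add_apply]
    push_cast
    ring
  have hψ : ∀ᶠ s in 𝓝 (0 : Vec r), charFunVec Pε (s ᵥ* B) ≠ 0 := by
    have hcont : ContinuousAt (fun s : Vec r => charFunVec Pε (s ᵥ* B)) 0 :=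
      ((continuous_charFunVec Pε).comp (by fun_prop)).continuousAt
    exact hcont.eventually_ne (by simp [charFunVec_zero])
  have hw : w = 0 := eq_zero_of_sum_cexp_dotProduct_eventuallyEq_zero hD
    (hψ.mono fun s hs => (mul_eq_zero.mp (hmoment s)).resolve_left hs)
  have hwy := congrFun hw y
  simpa [w, ENNReal.toReal_eq_zero_iff, hμY y, measure_ne_top, sub_eq_zero] using hwy

end JointMatching

lemma unifFin_singleton {L : ℕ} (y : Fin L) : unifFin L {y} = (L : ℝ≥0∞)⁻¹ := by
  simp [unifFin]

lemma unifFin_singleton_ne_zero {L : ℕ} (y : Fin L) : unifFin L {y} ≠ 0 := by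
  simp [unifFin_singleton]

lemma unifFin_singleton_ne_top {L : ℕ} (y : Fin L) : unifFin L {y} ≠ ∞ := by
  simp [unifFin_singleton, y.pos.ne']

instance {L : ℕ} : IsFiniteMeasure (unifFin L) where
  measure_univ_lt_top := by
    simpa [unifFin] using (ENNReal.inv_mul_le_one (L : ℝ≥0∞)).trans_lt ENNReal.one_lt_top

lemma exists_mulVec_add_eq_pad {p q r : ℕ} (B : Matrix (Fin r) (Fin p) ℝ) (c : Vec r) :
    ∃ (A : Matrix (Fin q) (Fin p) ℝ) (b : Vec q), ∀ x, pad (B *ᵥ x + c) = A *ᵥ x + b := by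
  refine ⟨Matrix.of fun i j => pad (fun k => B k j) i, pad c, fun x => funext fun i => ?_⟩
  by_cases hi : (i : ℕ) < r <;> simp [pad, hi, mulVec, dotProduct]

lemma risk_le_risk_pad_of_optimal {p q r L : ℕ} (μY : Measure (Fin L)) (Pε : Measure (Vec p))
    [SFinite Pε] {f₁ f₂ : Fin L → Vec p} (B : Matrix (Fin r) (Fin p) ℝ) (c : Vec r)
    (hB : ∀ y, B *ᵥ f₁ y = B *ᵥ f₂ y) {AJ : Matrix (Fin q) (Fin p) ℝ} {bJ : Vec q}
    (hAJ : ∀ y, AJ *ᵥ f₁ y = AJ *ᵥ f₂ y) {gJ g : Vec q → Fin L}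
    (hopt : ∀ (A : Matrix (Fin q) (Fin p) ℝ) (b : Vec q),
      (anticausal μY f₁ Pε).map (fun z => (A *ᵥ z.1 + b, B *ᵥ z.1 + c))
          = (anticausal μY f₂ Pε).map (fun z => (A *ᵥ z.1 + b, B *ᵥ z.1 + c)) →
        risk (anticausal μY f₁ Pε) (fun x => gJ (AJ *ᵥ x + bJ))
          ≤ risk (anticausal μY f₁ Pε) (fun x => g (A *ᵥ x + b))) :
    risk (anticausal μY f₂ Pε) (fun x => gJ (AJ *ᵥ x + bJ))
      ≤ risk (anticausal μY f₂ Pε) (fun x => g (pad (B *ᵥ x + c))) := by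
  obtain ⟨A, b, hpad⟩ := exists_mulVec_add_eq_pad (q := q) B c
  calc risk (anticausal μY f₂ Pε) (fun x => gJ (AJ *ᵥ x + bJ))
      = risk (anticausal μY f₁ Pε) (fun x => gJ (AJ *ᵥ x + bJ)) :=
        risk_anticausal_eq_of_forall _ _ fun y e => by simp only [mulVec_add, hAJ y]
    _ ≤ risk (anticausal μY f₁ Pε) (fun x => g (A *ᵥ x + b)) :=
        hopt A b <| map_anticausal_eq_of_forall _ _ (g := fun x => (A *ᵥ x + b, B *ᵥ x + c))
          (by fun_prop) fun y e => by rw [← hpad, ← hpad, mulVec_add, mulVec_add, hB y]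
    _ = risk (anticausal μY f₂ Pε) (fun x => g (pad (B *ᵥ x + c))) :=
        risk_anticausal_eq_of_forall _ _ fun y e => by rw [← hpad, mulVec_add, mulVec_add, hB y]

theorem statement12_general {p q r L M : ℕ} [NeZero M]
    (Pε : Measure (Vec p)) [IsProbabilityMeasure Pε]
    (hmeanInt : ∀ i, Integrable (fun x => x i) Pε) (hmean : ∀ i, ∫ x, x i ∂Pε = 0)
    (fs : Fin M → Fin L → Vec p) (fT : Fin L → Vec p)
    (G : Set (Vec q → Fin L))
    (B : Matrix (Fin r) (Fin p) ℝ) (c : Vec r)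
    (hCI : ∀ (m : Fin M) (y : Fin L),
      condLaw (anticausal (unifFin L) (fs m) Pε) (fun x => B.mulVec x + c) y =
        condLaw (anticausal (unifFin L) fT Pε) (fun x => B.mulVec x + c) y)
    (hsep : ∀ i j : Fin L, i ≠ j →
      meanVec (condLaw (anticausal (unifFin L) (fs 0) Pε) (fun x => B.mulVec x + c) i) ≠
        meanVec (condLaw (anticausal (unifFin L) (fs 0) Pε) (fun x => B.mulVec x + c) j)) :
    -- (1) any linear feature map satisfying the joint matching constraint is
    -- conditionally invariant across the first source and the target
    (∀ (A : Matrix (Fin q) (Fin p) ℝ) (b : Vec q),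
      ((anticausal (unifFin L) (fs 0) Pε).map
          (fun z => (A.mulVec z.1 + b, B.mulVec z.1 + c)) =
        (anticausal (unifFin L) fT Pε).map
          (fun z => (A.mulVec z.1 + b, B.mulVec z.1 + c))) →
      ∀ y : Fin L,
        condLaw (anticausal (unifFin L) (fs 0) Pε) (fun x => A.mulVec x + b) y =
          condLaw (anticausal (unifFin L) fT Pε) (fun x => A.mulVec x + b) y) ∧
    -- (2) if `r ≤ q`, the population JointDIP classifier has target risk no greater than
    -- the best classifier built on the zero-padded `φ_inv`, and in particular no greater
    -- than that of the optimal conditionally invariant classifier when its feature map is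
    -- the (padded) `φ_inv`.
    (r ≤ q →
      ∀ gJ ∈ G, ∀ (AJ : Matrix (Fin q) (Fin p) ℝ) (bJ : Vec q),
        ((anticausal (unifFin L) (fs 0) Pε).map
            (fun z => (AJ.mulVec z.1 + bJ, B.mulVec z.1 + c)) =
          (anticausal (unifFin L) fT Pε).map
            (fun z => (AJ.mulVec z.1 + bJ, B.mulVec z.1 + c))) →
        (∀ g' ∈ G, ∀ (A' : Matrix (Fin q) (Fin p) ℝ) (b' : Vec q),
          ((anticausal (unifFin L) (fs 0) Pε).map
              (fun z => (A'.mulVec z.1 + b', B.mulVec z.1 + c)) =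
            (anticausal (unifFin L) fT Pε).map
              (fun z => (A'.mulVec z.1 + b', B.mulVec z.1 + c))) →
          risk (anticausal (unifFin L) (fs 0) Pε) (fun x => gJ (AJ.mulVec x + bJ)) ≤
            risk (anticausal (unifFin L) (fs 0) Pε) (fun x => g' (A'.mulVec x + b'))) →
        ((∀ g' ∈ G,
            risk (anticausal (unifFin L) fT Pε) (fun x => gJ (AJ.mulVec x + bJ)) ≤
              risk (anticausal (unifFin L) fT Pε)
                (fun x => g' (pad (B.mulVec x + c)))) ∧
          ∀ gstar ∈ G,
            (∀ (m : Fin M) (y : Fin L),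
              condLaw (anticausal (unifFin L) (fs m) Pε)
                  (fun x => pad (B.mulVec x + c) : Vec p → Vec q) y =
                condLaw (anticausal (unifFin L) fT Pε)
                  (fun x => pad (B.mulVec x + c) : Vec p → Vec q) y) →
            (∀ g' ∈ G, ∀ (A' : Matrix (Fin q) (Fin p) ℝ) (b' : Vec q),
              (∀ (m : Fin M) (y : Fin L),
                condLaw (anticausal (unifFin L) (fs m) Pε) (fun x => A'.mulVec x + b') y =
                  condLaw (anticausal (unifFin L) fT Pε) (fun x => A'.mulVec x + b') y) →
              risk (anticausal (unifFin L) fT Pε)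
                  (fun x => gstar (pad (B.mulVec x + c))) ≤
                risk (anticausal (unifFin L) fT Pε) (fun x => g' (A'.mulVec x + b'))) →
            risk (anticausal (unifFin L) fT Pε) (fun x => gJ (AJ.mulVec x + bJ)) ≤
              risk (anticausal (unifFin L) fT Pε)
                (fun x => gstar (pad (B.mulVec x + c))))) := by
  have hmeanB : ∀ f y, meanVec (condLaw (anticausal (unifFin L) f Pε) (fun x => B *ᵥ x + c) y)
      = B *ᵥ f y + c := fun f y =>
    meanVec_condLaw_anticausal_affine B (unifFin L) f hmeanInt hmean c
      (unifFin_singleton_ne_zero y) (unifFin_singleton_ne_top y)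
  have hB : ∀ y, B *ᵥ fs 0 y = B *ᵥ fT y := fun y =>
    add_right_cancel (by simpa only [hmeanB] using congrArg meanVec (hCI 0 y))
  have hD : Function.Injective fun y => B *ᵥ fs 0 y + c := fun i j hij =>
    by_contra fun hne => hsep i j hne (by rw [hmeanB, hmeanB]; exact hij)
  have hA := fun (A : Matrix (Fin q) (Fin p) ℝ) b =>
    mulVec_eq_of_map_affine_pair_eq (unifFin L) Pε hmeanInt A b B c unifFin_singleton_ne_zero hB hD
  refine ⟨fun A b hmatch y => ?_, fun _ gJ _ AJ bJ hmatchJ hoptJ => ?_⟩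
  · simp only [condLaw_anticausal _ _ _ (by fun_prop : Measurable fun x => A *ᵥ x + b)
      (unifFin_singleton_ne_zero y) (unifFin_singleton_ne_top y), mulVec_add, hA A b hmatch y]
  have hbest := fun g' hg' =>
    risk_le_risk_pad_of_optimal _ _ B c hB (hA AJ bJ hmatchJ) (hoptJ g' hg')
  exact ⟨hbest, fun gstar hgstar _ _ => hbest gstar hgstar⟩

/-- **Theorem 4.4(b)**: under the general anticausal model with uniform labels, if
`φ_inv` is a linear conditionally invariant feature map whose conditional means separate
all labels, then any linear feature map satisfying the exact JointDIP matching constraint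
is conditionally invariant across the first source and target; in particular the
population JointDIP feature map is, and, if `r ≤ q`, the JointDIP classifier beats any
classifier built on the zero-padded `φ_inv` — in particular the optimal conditionally
invariant classifier built on it. -/
theorem statement12 {p q r L M : ℕ} (hL : 0 < L) [NeZero M]
    (Pε : Measure (Vec p)) [IsProbabilityMeasure Pε]
    (hmeanInt : ∀ i, Integrable (fun x => x i) Pε) (hmean : ∀ i, ∫ x, x i ∂Pε = 0)
    (fs : Fin M → Fin L → Vec p) (fT : Fin L → Vec p)
    (G : Set (Vec q → Fin L))
    (B : Matrix (Fin r) (Fin p) ℝ) (c : Vec r)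
    (hCI : ∀ (m : Fin M) (y : Fin L),
      condLaw (anticausal (unifFin L) (fs m) Pε) (fun x => B.mulVec x + c) y =
        condLaw (anticausal (unifFin L) fT Pε) (fun x => B.mulVec x + c) y)
    (hsep : ∀ i j : Fin L, i ≠ j →
      meanVec (condLaw (anticausal (unifFin L) (fs 0) Pε) (fun x => B.mulVec x + c) i) ≠
        meanVec (condLaw (anticausal (unifFin L) (fs 0) Pε) (fun x => B.mulVec x + c) j)) :
    -- (1) any linear feature map satisfying the joint matching constraint is
    -- conditionally invariant across the first source and the target
    (∀ (A : Matrix (Fin q) (Fin p) ℝ) (b : Vec q),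
      ((anticausal (unifFin L) (fs 0) Pε).map
          (fun z => (A.mulVec z.1 + b, B.mulVec z.1 + c)) =
        (anticausal (unifFin L) fT Pε).map
          (fun z => (A.mulVec z.1 + b, B.mulVec z.1 + c))) →
      ∀ y : Fin L,
        condLaw (anticausal (unifFin L) (fs 0) Pε) (fun x => A.mulVec x + b) y =
          condLaw (anticausal (unifFin L) fT Pε) (fun x => A.mulVec x + b) y) ∧
    -- (2) if `r ≤ q`, the population JointDIP classifier has target risk no greater than
    -- the best classifier built on the zero-padded `φ_inv`, and in particular no greater
    -- than that of the optimal conditionally invariant classifier when its feature map is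
    -- the (padded) `φ_inv`.
    (r ≤ q →
      ∀ gJ ∈ G, ∀ (AJ : Matrix (Fin q) (Fin p) ℝ) (bJ : Vec q),
        ((anticausal (unifFin L) (fs 0) Pε).map
            (fun z => (AJ.mulVec z.1 + bJ, B.mulVec z.1 + c)) =
          (anticausal (unifFin L) fT Pε).map
            (fun z => (AJ.mulVec z.1 + bJ, B.mulVec z.1 + c))) →
        (∀ g' ∈ G, ∀ (A' : Matrix (Fin q) (Fin p) ℝ) (b' : Vec q),
          ((anticausal (unifFin L) (fs 0) Pε).map
              (fun z => (A'.mulVec z.1 + b', B.mulVec z.1 + c)) =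
            (anticausal (unifFin L) fT Pε).map
              (fun z => (A'.mulVec z.1 + b', B.mulVec z.1 + c))) →
          risk (anticausal (unifFin L) (fs 0) Pε) (fun x => gJ (AJ.mulVec x + bJ)) ≤
            risk (anticausal (unifFin L) (fs 0) Pε) (fun x => g' (A'.mulVec x + b'))) →
        ((∀ g' ∈ G,
            risk (anticausal (unifFin L) fT Pε) (fun x => gJ (AJ.mulVec x + bJ)) ≤
              risk (anticausal (unifFin L) fT Pε)
                (fun x => g' (pad (B.mulVec x + c)))) ∧
          ∀ gstar ∈ G,
            (∀ (m : Fin M) (y : Fin L),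
              condLaw (anticausal (unifFin L) (fs m) Pε)
                  (fun x => pad (B.mulVec x + c) : Vec p → Vec q) y =
                condLaw (anticausal (unifFin L) fT Pε)
                  (fun x => pad (B.mulVec x + c) : Vec p → Vec q) y) →
            (∀ g' ∈ G, ∀ (A' : Matrix (Fin q) (Fin p) ℝ) (b' : Vec q),
              (∀ (m : Fin M) (y : Fin L),
                condLaw (anticausal (unifFin L) (fs m) Pε) (fun x => A'.mulVec x + b') y =
                  condLaw (anticausal (unifFin L) fT Pε) (fun x => A'.mulVec x + b') y) →
              risk (anticausal (unifFin L) fT Pε)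
                  (fun x => gstar (pad (B.mulVec x + c))) ≤
                risk (anticausal (unifFin L) fT Pε) (fun x => g' (A'.mulVec x + b'))) →
            risk (anticausal (unifFin L) fT Pε) (fun x => gJ (AJ.mulVec x + bJ)) ≤
              risk (anticausal (unifFin L) fT Pε)
                (fun x => gstar (pad (B.mulVec x + c))))) :=
  statement12_general Pε hmeanInt hmean fs fT G B c hCI hsep

end
end

section
/- Let P be a probability distribution on R^p whose characteristic function vanishes nowhere. Let u_1,…,u_L ∈ R^p be pairwise distinct, let ũ_1,…,ũ_L ∈ R^p be pairwise distinct, and let w_1,…,w_L and w̃_1,…,w̃_L be strictly positive mixing weights with Σ_j w_j = Σ_j w̃_j = 1. If the two location mixtures coincide, i.e., Σ_{j=1}^L w_j·P(· − u_j) = Σ_{j=1}^L w̃_j·P(· − ũ_j) as measures, then there exists a permutation π of {1,…,L} such that u_j = ũ_{π(j)} for all j. -/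
/-! The mixture `∑ⱼ wⱼ • P(· - uⱼ)` is `P` convolved with the mixing measure `∑ⱼ wⱼ • δ_{uⱼ}`,
so its characteristic function is that of `P` times that of the mixing measure. As the
characteristic function of `P` vanishes nowhere it cancels, and since characteristic functions
determine finite measures, the two mixing measures coincide. Hence every atom `uⱼ` is some `vₖ`,
and injectivity of `u` turns `j ↦ k` into a permutation. -/

open MeasureTheory

noncomputable section

/-- Characteristic function of a distribution on `ℝ^p`. -/
def charFn {p : ℕ} (P : Measure (Vec p)) (t : Vec p) : ℂ :=
  ∫ x, Complex.exp (Complex.I * ((∑ i, t i * x i : ℝ) : ℂ)) ∂P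

open scoped NNReal ENNReal

namespace MeasureTheory

instance Measure.isFiniteMeasure_coe_nnreal_smul {α : Type*} [MeasurableSpace α]
    (μ : Measure α) [IsFiniteMeasure μ] (c : ℝ≥0) : IsFiniteMeasure ((c : ℝ≥0∞) • μ) :=
  μ.smul_finite ENNReal.coe_ne_top

section NormedSpace

variable {E : Type*} [NormedAddCommGroup E] [NormedSpace ℝ E] [MeasurableSpace E]

lemma charFunDual_sum_smul [OpensMeasurableSpace E] {ι : Type*} [Fintype ι]
    (c : ι → ℝ≥0) (μ : ι → Measure E) [∀ i, IsFiniteMeasure (μ i)] (L : StrongDual ℝ E) :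
    charFunDual (∑ i, (c i : ℝ≥0∞) • μ i) L = ∑ i, (c i : ℂ) * charFunDual (μ i) L := by
  simp only [charFunDual]
  rw [integral_finsetSum_measure fun i _ ↦
    ((BoundedContinuousFunction.integrable _ _).smul_measure ENNReal.coe_ne_top)]
  simp [NNReal.smul_def, Complex.real_smul]

lemma charFunDual_sum_smul_map_add [BorelSpace E] {ι : Type*} [Fintype ι] (c : ι → ℝ≥0)
    (μ : Measure E) [IsFiniteMeasure μ] (u : ι → E) (L : StrongDual ℝ E) :
    charFunDual (∑ i, (c i : ℝ≥0∞) • μ.map (· + u i)) L =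
      charFunDual (∑ i, (c i : ℝ≥0∞) • Measure.dirac (u i)) L * charFunDual μ L := by
  simp only [charFunDual_sum_smul, charFunDual_map_add_const, charFunDual_dirac, Finset.sum_mul]
  exact Finset.sum_congr rfl fun i _ ↦ by ring

lemma Measure.sum_smul_dirac_eq_of_sum_smul_map_add_eq [BorelSpace E] [CompleteSpace E]
    [SecondCountableTopology E] {ι κ : Type*} [Fintype ι] [Fintype κ] {μ : Measure E}
    [IsFiniteMeasure μ] (hμ : ∀ L, charFunDual μ L ≠ 0) {c : ι → ℝ≥0} {c' : κ → ℝ≥0}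
    {u : ι → E} {v : κ → E}
    (h : ∑ i, (c i : ℝ≥0∞) • μ.map (· + u i) = ∑ k, (c' k : ℝ≥0∞) • μ.map (· + v k)) :
    ∑ i, (c i : ℝ≥0∞) • Measure.dirac (u i) = ∑ k, (c' k : ℝ≥0∞) • Measure.dirac (v k) := by
  refine Measure.ext_of_charFunDual <| funext fun L ↦ mul_right_cancel₀ (hμ L) ?_
  rw [← charFunDual_sum_smul_map_add, ← charFunDual_sum_smul_map_add, h]

end NormedSpace

lemma Measure.mem_range_of_sum_smul_dirac_eq {X ι κ : Type*} [MeasurableSpace X]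
    [MeasurableSingletonClass X] [Fintype ι] [Fintype κ] {c : ι → ℝ≥0∞} {c' : κ → ℝ≥0∞}
    {u : ι → X} {v : κ → X}
    (h : ∑ i, c i • Measure.dirac (u i) = ∑ k, c' k • Measure.dirac (v k)) {i : ι}
    (hi : c i ≠ 0) : u i ∈ Set.range v := by
  by_contra hv
  have hle : c i ≤ (∑ j, c j • Measure.dirac (u j)) {u i} := by
    simpa using Finset.single_le_sum (f := fun j ↦ (c j • Measure.dirac (u j)) {u i})
      (fun _ _ ↦ zero_le) (Finset.mem_univ i)
  have hzero : (∑ k, c' k • Measure.dirac (v k)) {u i} = 0 := by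
    simp only [Measure.coe_finsetSum, Finset.sum_apply, Measure.smul_apply,
      Measure.dirac_apply' _ (measurableSet_singleton _)]
    exact Finset.sum_eq_zero fun k _ ↦ by
      simp [Set.indicator_of_notMem (fun hk : v k ∈ {u i} ↦ hv ⟨k, hk⟩)]
  rw [h, hzero] at hle
  exact hi (nonpos_iff_eq_zero.mp hle)

end MeasureTheory

lemma charFunDual_eq_charFn {p : ℕ} (P : Measure (Vec p)) (L : StrongDual ℝ (Vec p)) :
    charFunDual P L = charFn P (fun i ↦ L (Pi.single i 1)) := by
  classical
  refine integral_congr_ae (Filter.Eventually.of_forall fun x ↦ ?_)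
  have hL : L x = ∑ i, L (Pi.single i 1) * x i := by
    conv_lhs => rw [pi_eq_sum_univ' x]
    simp [mul_comm]
  simp [BoundedContinuousFunction.probCharDual_apply, hL, mul_comm]

theorem statement15_general {p L : ℕ}
    (P : Measure (Vec p)) [IsProbabilityMeasure P]
    (hchar : ∀ t : Vec p, charFn P t ≠ 0)
    (u v : Fin L → Vec p)
    (hu : Function.Injective u)
    (w w' : Fin L → NNReal)
    (hw : ∀ j, 0 < w j)
    (hmix : (∑ j, (w j : ENNReal) • P.map (fun x => x + u j)) =
            (∑ j, (w' j : ENNReal) • P.map (fun x => x + v j))) :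
    ∃ π : Equiv.Perm (Fin L), ∀ j, u j = v (π j) := by
  have hφ : ∀ L, charFunDual P L ≠ 0 := fun L ↦ charFunDual_eq_charFn P L ▸ hchar _
  have hatoms := Measure.sum_smul_dirac_eq_of_sum_smul_map_add_eq hφ hmix
  choose f hf using fun j ↦
    Measure.mem_range_of_sum_smul_dirac_eq hatoms (ENNReal.coe_ne_zero.mpr (hw j).ne')
  have hf_inj : Function.Injective f := fun a b hab ↦ hu (by rw [← hf a, ← hf b, hab])
  exact ⟨Equiv.ofBijective f hf_inj.bijective_of_finite, fun j ↦ (hf j).symm⟩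

/-- **Lemma C.1**: identifiability of location mixtures.  If two finite location mixtures
of a distribution whose characteristic function vanishes nowhere coincide, the location
parameters agree up to a permutation. -/
theorem statement15 {p L : ℕ}
    (P : Measure (Vec p)) [IsProbabilityMeasure P]
    (hchar : ∀ t : Vec p, charFn P t ≠ 0)
    (u v : Fin L → Vec p)
    (hu : Function.Injective u) (hv : Function.Injective v)
    (w w' : Fin L → NNReal)
    (hw : ∀ j, 0 < w j) (hw' : ∀ j, 0 < w' j)
    (hsum : ∑ j, w j = 1) (hsum' : ∑ j, w' j = 1)
    (hmix : (∑ j, (w j : ENNReal) • P.map (fun x => x + u j)) =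
            (∑ j, (w' j : ENNReal) • P.map (fun x => x + v j))) :
    ∃ π : Equiv.Perm (Fin L), ∀ j, u j = v (π j) :=
  statement15_general P hchar u v hu w w' hw hmix

end
end

section
/- For p₁ ∈ (0,1) and σ > 0, define for x > 0 the function r(x) = (1/2)·[ 1 − p₁·erf( x/(2√2·σ) + (σ/(√2·x))·log(p₁/(1−p₁)) ) − (1−p₁)·erf( x/(2√2·σ) − (σ/(√2·x))·log(p₁/(1−p₁)) ) ]. Then for all x > 0 the derivative satisfies r'(x) = −√( p₁(1−p₁)/(2π σ²) )·exp( −x²/(8σ²) − (σ²/(2x²))·log²(p₁/(1−p₁)) ); in particular r is strictly decreasing on (0, ∞). -/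
/-!
Write the two erf arguments as `a + b` and `a - b` with `a = x/(2√2σ)` and `b = σ log(p₁/(1-p₁))/(√2 x)`.
Since `4ab = log(p₁/(1-p₁))`, the weighted Gaussian densities `p₁ e^{-(a+b)²}` and `(1-p₁) e^{-(a-b)²}`
coincide (both equal `√(p₁(1-p₁)) e^{-(a²+b²)}`), so the contributions of `b'` cancel in `r'` and only
`a' = 1/(2√2σ)` survives. The resulting derivative is negative, hence `r` is strictly decreasing.
-/

noncomputable section

/-- The Gauss error function `erf(t) = (2/√π) ∫₀ᵗ e^{−s²} ds`. -/
def erf (t : ℝ) : ℝ := (2 / Real.sqrt Real.pi) * ∫ s in (0:ℝ)..t, Real.exp (-s ^ 2)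

/-- The function `r_{p₁,σ}` of Eq. (B.31): the optimal target risk of linear threshold
classifiers in a balanced two-class Gaussian location model with class-mean separation `x`. -/
def rFun (p₁ σ x : ℝ) : ℝ :=
  (1 / 2) *
    (1 - p₁ * erf (x / (2 * Real.sqrt 2 * σ) +
          (σ / (Real.sqrt 2 * x)) * Real.log (p₁ / (1 - p₁)))
       - (1 - p₁) * erf (x / (2 * Real.sqrt 2 * σ) -
          (σ / (Real.sqrt 2 * x)) * Real.log (p₁ / (1 - p₁))))

open Real

lemma hasDerivAt_erf (t : ℝ) : HasDerivAt erf (2 / √π * exp (-t ^ 2)) t := by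
  have hcont : Continuous fun s : ℝ => exp (-s ^ 2) := by fun_prop
  exact ((hcont.integral_hasStrictDerivAt 0 t).hasDerivAt).const_mul _

lemma mul_exp_neg_add_sq_eq {p q a b : ℝ} (hp : 0 < p) (hq : 0 < q)
    (hab : 4 * a * b = log (p / q)) :
    p * exp (-(a + b) ^ 2) = √(p * q) * exp (-(a ^ 2 + b ^ 2)) := by
  have hsqrt : √(p * q) = exp ((log p + log q) / 2) := by
    rw [exp_half, exp_add, exp_log hp, exp_log hq]
  rw [log_div hp.ne' hq.ne'] at hab
  conv_lhs => rw [← exp_log hp]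
  rw [hsqrt, ← exp_add, ← exp_add]
  congr 1
  linear_combination (-1 / 2 : ℝ) * hab

lemma mul_exp_neg_sub_sq_eq {p q a b : ℝ} (hp : 0 < p) (hq : 0 < q)
    (hab : 4 * a * b = log (p / q)) :
    q * exp (-(a - b) ^ 2) = √(p * q) * exp (-(a ^ 2 + b ^ 2)) := by
  have hab' : 4 * a * -b = log (q / p) := by
    rw [← inv_div, log_inv, ← hab]; ring
  simpa [sub_eq_add_neg, mul_comm q p] using mul_exp_neg_add_sq_eq hq hp hab'

lemma hasDerivAt_mul_erf_add_add_mul_erf_sub {a b : ℝ → ℝ} {a' b' p q x : ℝ}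
    (ha : HasDerivAt a a' x) (hb : HasDerivAt b b' x) (hp : 0 < p) (hq : 0 < q)
    (hab : 4 * a x * b x = log (p / q)) :
    HasDerivAt (fun y => p * erf (a y + b y) + q * erf (a y - b y))
      (4 / √π * √(p * q) * exp (-(a x ^ 2 + b x ^ 2)) * a') x := by
  have hA := ((hasDerivAt_erf (a x + b x)).comp x (ha.add hb)).const_mul p
  have hB := ((hasDerivAt_erf (a x - b x)).comp x (ha.sub hb)).const_mul q
  refine (hA.add hB).congr_deriv ?_
  linear_combination (2 / √π * (a' + b')) * mul_exp_neg_add_sq_eq hp hq hab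
    + (2 / √π * (a' - b')) * mul_exp_neg_sub_sq_eq hp hq hab

lemma hasDerivAt_rFun {p₁ σ x : ℝ} (hp₀ : 0 < p₁) (hp₁ : p₁ < 1) (hσ : 0 < σ) (hx : 0 < x) :
    HasDerivAt (rFun p₁ σ)
      (-√(p₁ * (1 - p₁) / (2 * π * σ ^ 2)) *
        exp (-(x ^ 2 / (8 * σ ^ 2)) - (σ ^ 2 / (2 * x ^ 2)) * log (p₁ / (1 - p₁)) ^ 2)) x := by
  have hq₀ : 0 < 1 - p₁ := sub_pos.2 hp₁
  set L := log (p₁ / (1 - p₁))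
  have hb : DifferentiableAt ℝ (fun y : ℝ => σ / (√2 * y) * L) x := by
    fun_prop (disch := positivity)
  have hab : 4 * (x / (2 * √2 * σ)) * (σ / (√2 * x) * L) = L := by
    field_simp
    rw [sq_sqrt zero_le_two]
    ring
  have h := hasDerivAt_mul_erf_add_add_mul_erf_sub
    ((hasDerivAt_id' x).div_const (2 * √2 * σ)) hb.hasDerivAt hp₀ hq₀ hab
  have hr : rFun p₁ σ = fun y => 1 / 2 * (1 - (p₁ * erf (y / (2 * √2 * σ) + σ / (√2 * y) * L)
      + (1 - p₁) * erf (y / (2 * √2 * σ) - σ / (√2 * y) * L))) := by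
    funext y
    rw [rFun]
    ring
  have hexponent : -((x / (2 * √2 * σ)) ^ 2 + (σ / (√2 * x) * L) ^ 2)
      = -(x ^ 2 / (8 * σ ^ 2)) - σ ^ 2 / (2 * x ^ 2) * L ^ 2 := by
    field_simp
    rw [sq_sqrt zero_le_two]
    ring
  have hconst : √(p₁ * (1 - p₁) / (2 * π * σ ^ 2)) = √(p₁ * (1 - p₁)) / (√2 * √π * σ) := by
    rw [sqrt_div' _ (by positivity), sqrt_mul' _ (sq_nonneg σ), sqrt_mul' _ pi_pos.le,
      sqrt_sq hσ.le]
  rw [hr]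
  refine ((h.const_sub 1).const_mul (1 / 2)).congr_deriv ?_
  rw [hexponent, hconst]
  field_simp
  ring

/-- The derivative formula for `r_{p₁,σ}` and its strict monotonicity on `(0,∞)`. -/
theorem statement19 (p₁ σ : ℝ) (hp : p₁ ∈ Set.Ioo (0:ℝ) 1) (hσ : 0 < σ) :
    (∀ x : ℝ, 0 < x →
      HasDerivAt (rFun p₁ σ)
        (-Real.sqrt (p₁ * (1 - p₁) / (2 * Real.pi * σ ^ 2)) *
          Real.exp (-(x ^ 2 / (8 * σ ^ 2)) -
            (σ ^ 2 / (2 * x ^ 2)) * (Real.log (p₁ / (1 - p₁))) ^ 2)) x) ∧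
    StrictAntiOn (rFun p₁ σ) (Set.Ioi 0) := by
  obtain ⟨hp₀, hp₁⟩ := hp
  have hq₀ : 0 < 1 - p₁ := sub_pos.2 hp₁
  have hderiv x (hx : 0 < x) := hasDerivAt_rFun hp₀ hp₁ hσ hx
  refine ⟨hderiv, strictAntiOn_of_hasDerivWithinAt_neg (convex_Ioi 0)
    (fun x hx => (hderiv x hx).continuousAt.continuousWithinAt)
    (fun x hx => (hderiv x (interior_subset hx)).hasDerivWithinAt) fun x _ => ?_⟩
  rw [neg_mul, neg_lt_zero]
  exact mul_pos (sqrt_pos.2 (by positivity)) (exp_pos _)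

end
end
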